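/- (Policy gradient representation, deterministic-grid case of the paper's main theorem.) The map θ ↦ J^θ_0(s₀,a₀) is differentiable on ℝ, and for every θ ∈ ℝ its derivative equals E^θ[ Σ_{k=0}^{N−1} (∂_θ π^θ_k(A_k|S_k,A_{k−1}) / π^θ_k(A_k|S_k,A_{k−1})) · ( V^θ_k(S_k,A_k) − c_k(S_k,A_{k−1},A_k) − J^θ_k(S_k,A_{k−1}) ) ], i.e. the gradient of the expected reward is the expected sum over decision times of the score ∂_θ log π^θ_k of the sampled action multiplied by the post-action value minus the switching cost minus the pre-action value. -/

import Mathlib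

open Finset

noncomputable section

/-- `stateAt s₀ ω k` is the state `S_k` along a trajectory `ω = (A_0,S_1,…,A_{N-1},S_N)`:
`stateAt s₀ ω 0 = s₀` and `stateAt s₀ ω (k+1) = (ω k).2 = S_{k+1}`. -/
def stateAt {S A : Type*} {N : ℕ} (s₀ : S) (ω : Fin N → A × S) : ℕ → S
  | 0 => s₀
  | k + 1 => if h : k < N then (ω ⟨k, h⟩).2 else s₀

/-- `actAt a₀ ω k` is the action `A_{k-1}` along a trajectory:
`actAt a₀ ω 0 = a₀` (i.e. `A_{-1} = a₀`) and `actAt a₀ ω (k+1) = (ω k).1 = A_k`. -/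
def actAt {S A : Type*} {N : ℕ} (a₀ : A) (ω : Fin N → A × S) : ℕ → A
  | 0 => a₀
  | k + 1 => if h : k < N then (ω ⟨k, h⟩).1 else a₀

/-- The trajectory weight
`W^θ(ω) = ∏_{k=0}^{N-1} π^θ_k(A_k | S_k, A_{k-1}) · p_k(S_k, A_k, S_{k+1})`,
where `π k θ s a a'` denotes `π^θ_k(a' | s, a)` and `p k s a s'` denotes `p_k(s,a,s')`. -/
def weight {S A : Type*} (N : ℕ) (p : ℕ → S → A → S → ℝ)
    (π : ℕ → ℝ → S → A → A → ℝ) (θ : ℝ) (s₀ : S) (a₀ : A) (ω : Fin N → A × S) : ℝ :=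
  ∏ k ∈ Finset.range N,
    π k θ (stateAt s₀ ω k) (actAt a₀ ω k) (actAt a₀ ω (k + 1)) *
      p k (stateAt s₀ ω k) (actAt a₀ ω (k + 1)) (stateAt s₀ ω (k + 1))

/-- Auxiliary value function defined by backward recursion on the number of remaining
steps: `Jaux N p π f c g θ m = J^θ_{N-m}`.  In particular `Jaux … 0 = J^θ_N = g` and
`J^θ_k(s,a) = ∑_{a'} π^θ_k(a'|s,a) · (V^θ_k(s,a') − c_k(s,a,a'))` with
`V^θ_k(s,a') = f_k(s,a') + ∑_{s'} p_k(s,a',s') J^θ_{k+1}(s',a')`. -/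
def Jaux {S A : Type*} [Fintype S] [Fintype A] (N : ℕ) (p : ℕ → S → A → S → ℝ)
    (π : ℕ → ℝ → S → A → A → ℝ) (f : ℕ → S → A → ℝ) (c : ℕ → S → A → A → ℝ)
    (g : S → A → ℝ) (θ : ℝ) : ℕ → S → A → ℝ
  | 0 => g
  | m + 1 => fun s a =>
      ∑ a' : A, π (N - (m + 1)) θ s a a' *
        ((f (N - (m + 1)) s a' +
            ∑ s' : S, p (N - (m + 1)) s a' s' * Jaux N p π f c g θ m s' a') -
          c (N - (m + 1)) s a a')

/-- The pre-action value function `J^θ_k`. -/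
def Jval {S A : Type*} [Fintype S] [Fintype A] (N : ℕ) (p : ℕ → S → A → S → ℝ)
    (π : ℕ → ℝ → S → A → A → ℝ) (f : ℕ → S → A → ℝ) (c : ℕ → S → A → A → ℝ)
    (g : S → A → ℝ) (θ : ℝ) (k : ℕ) : S → A → ℝ :=
  Jaux N p π f c g θ (N - k)

/-- The post-action value function
`V^θ_k(s,a') = f_k(s,a') + ∑_{s'} p_k(s,a',s') J^θ_{k+1}(s',a')`. -/
def Vval {S A : Type*} [Fintype S] [Fintype A] (N : ℕ) (p : ℕ → S → A → S → ℝ)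
    (π : ℕ → ℝ → S → A → A → ℝ) (f : ℕ → S → A → ℝ) (c : ℕ → S → A → A → ℝ)
    (g : S → A → ℝ) (θ : ℝ) (k : ℕ) (s : S) (a' : A) : ℝ :=
  f k s a' + ∑ s' : S, p k s a' s' * Jval N p π f c g θ (k + 1) s' a'

/-- The total return
`G(ω) = ∑_{k=0}^{N-1} [f_k(S_k,A_k) − c_k(S_k,A_{k-1},A_k)] + g(S_N,A_{N-1})`. -/
def totalReturn {S A : Type*} (N : ℕ) (f : ℕ → S → A → ℝ) (c : ℕ → S → A → A → ℝ)
    (g : S → A → ℝ) (s₀ : S) (a₀ : A) (ω : Fin N → A × S) : ℝ :=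
  (∑ k ∈ Finset.range N,
      (f k (stateAt s₀ ω k) (actAt a₀ ω (k + 1)) -
        c k (stateAt s₀ ω k) (actAt a₀ ω k) (actAt a₀ ω (k + 1)))) +
    g (stateAt s₀ ω N) (actAt a₀ ω N)

/-!
Backward induction on the decision time. Differentiating the recursion
`J_t = ∑_{a'} π_t (V_t − c_t)` gives `∂J_t = ∑_{a'} ∂π_t (V_t − c_t) + ∑_{a'} π_t ∑_{s'} p_t ∂J_{t+1}`.
Since `∑_{a'} ∂π_t = 0`, the first sum equals `∑_{a'} π_t · (∂π_t / π_t) · (V_t − c_t − J_t)`, so `∂J_t`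
satisfies the same one-step recursion as the expectation of the additive path functional
`∑_k (∂π_k / π_k) (V_k − c_k − J_k)`, and the two coincide.
-/

section Trajectory

variable {S A : Type*}

lemma stateAt_cons_succ {m : ℕ} (s : S) (y : A × S) (ω : Fin m → A × S) {j : ℕ} (hj : j ≤ m) :
    stateAt (N := m + 1) s (Fin.cons y ω) (j + 1) = stateAt y.2 ω j := by
  cases j with
  | zero => simp [stateAt]
  | succ i =>
    simp only [stateAt, show i + 1 < m + 1 by omega, show i < m by omega, ↓reduceDIte]
    rfl

lemma actAt_cons_succ {m : ℕ} (a : A) (y : A × S) (ω : Fin m → A × S) {j : ℕ} (hj : j ≤ m) :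
    actAt (N := m + 1) a (Fin.cons y ω) (j + 1) = actAt y.1 ω j := by
  cases j with
  | zero => simp [actAt]
  | succ i =>
    simp only [actAt, show i + 1 < m + 1 by omega, show i < m by omega, ↓reduceDIte]
    rfl

def weightFrom (p : ℕ → S → A → S → ℝ) (π : ℕ → ℝ → S → A → A → ℝ) (θ : ℝ) (m t : ℕ)
    (s : S) (a : A) (ω : Fin m → A × S) : ℝ :=
  ∏ j ∈ range m, π (t + j) θ (stateAt s ω j) (actAt a ω j) (actAt a ω (j + 1)) *
    p (t + j) (stateAt s ω j) (actAt a ω (j + 1)) (stateAt s ω (j + 1))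

def pathSum (h : ℕ → S → A → A → ℝ) (m t : ℕ) (s : S) (a : A) (ω : Fin m → A × S) : ℝ :=
  ∑ j ∈ range m, h (t + j) (stateAt s ω j) (actAt a ω j) (actAt a ω (j + 1))

lemma weightFrom_cons (p : ℕ → S → A → S → ℝ) (π : ℕ → ℝ → S → A → A → ℝ) (θ : ℝ)
    (m t : ℕ) (s : S) (a : A) (y : A × S) (ω : Fin m → A × S) :
    weightFrom p π θ (m + 1) t s a (Fin.cons y ω) =
      π t θ s a y.1 * p t s y.1 y.2 * weightFrom p π θ m (t + 1) y.2 y.1 ω := by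
  rw [weightFrom, prod_range_succ', mul_comm]
  congr 1
  refine prod_congr rfl fun j hj => ?_
  have hj : j < m := mem_range.mp hj
  rw [stateAt_cons_succ s y ω hj.le, actAt_cons_succ a y ω hj.le,
    actAt_cons_succ a y ω hj, stateAt_cons_succ s y ω hj, add_right_comm, add_assoc]

lemma pathSum_cons (h : ℕ → S → A → A → ℝ) (m t : ℕ) (s : S) (a : A) (y : A × S)
    (ω : Fin m → A × S) :
    pathSum h (m + 1) t s a (Fin.cons y ω) = h t s a y.1 + pathSum h m (t + 1) y.2 y.1 ω := by
  rw [pathSum, sum_range_succ', add_comm]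
  congr 1
  refine sum_congr rfl fun j hj => ?_
  have hj : j < m := mem_range.mp hj
  rw [stateAt_cons_succ s y ω hj.le, actAt_cons_succ a y ω hj.le,
    actAt_cons_succ a y ω hj, add_right_comm, add_assoc]

end Trajectory

section Expectation

variable {S A : Type*} [Fintype S] [Fintype A]

lemma sum_fin_succ_pi {m : ℕ} (F : (Fin (m + 1) → A × S) → ℝ) :
    ∑ ω, F ω = ∑ y : A × S, ∑ ω : Fin m → A × S, F (Fin.cons y ω) := by
  rw [← (Fin.consEquiv fun _ => A × S).sum_comp, Fintype.sum_prod_type]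
  rfl

lemma sum_weightFrom_eq_one {n : ℕ} {p : ℕ → S → A → S → ℝ} {π : ℕ → ℝ → S → A → A → ℝ}
    (hp_sum : ∀ k < n, ∀ s a, ∑ s', p k s a s' = 1)
    (hπ_sum : ∀ k < n, ∀ θ s a, ∑ a', π k θ s a a' = 1) (θ : ℝ) :
    ∀ m t, t + m ≤ n → ∀ s a, ∑ ω, weightFrom p π θ m t s a ω = 1 := by
  intro m
  induction m with
  | zero => simp [weightFrom]
  | succ m ih =>
    intro t htm s a
    have ht : t < n := by omega
    calc ∑ ω, weightFrom p π θ (m + 1) t s a ω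
        = ∑ a', ∑ s', π t θ s a a' * p t s a' s' *
            ∑ ω, weightFrom p π θ m (t + 1) s' a' ω := by
          simp only [sum_fin_succ_pi, weightFrom_cons, ← mul_sum, Fintype.sum_prod_type]
      _ = ∑ a', π t θ s a a' * ∑ s', p t s a' s' := by
          simp only [ih (t + 1) (by omega), mul_one, mul_sum]
      _ = 1 := by simp only [hp_sum t ht, mul_one, hπ_sum t ht]

def expectedPathSum (p : ℕ → S → A → S → ℝ) (π : ℕ → ℝ → S → A → A → ℝ) (θ : ℝ)
    (h : ℕ → S → A → A → ℝ) (m t : ℕ) (s : S) (a : A) : ℝ :=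
  ∑ ω, weightFrom p π θ m t s a ω * pathSum h m t s a ω

lemma expectedPathSum_zero (p : ℕ → S → A → S → ℝ) (π : ℕ → ℝ → S → A → A → ℝ) (θ : ℝ)
    (h : ℕ → S → A → A → ℝ) (t : ℕ) (s : S) (a : A) :
    expectedPathSum p π θ h 0 t s a = 0 := by
  simp [expectedPathSum, pathSum]

lemma expectedPathSum_succ {n : ℕ} {p : ℕ → S → A → S → ℝ} {π : ℕ → ℝ → S → A → A → ℝ}
    (hp_sum : ∀ k < n, ∀ s a, ∑ s', p k s a s' = 1)
    (hπ_sum : ∀ k < n, ∀ θ s a, ∑ a', π k θ s a a' = 1) (θ : ℝ) (h : ℕ → S → A → A → ℝ)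
    {m t : ℕ} (htm : t + (m + 1) ≤ n) (s : S) (a : A) :
    expectedPathSum p π θ h (m + 1) t s a =
      ∑ a', π t θ s a a' *
        (h t s a a' + ∑ s', p t s a' s' * expectedPathSum p π θ h m (t + 1) s' a') := by
  have hW := sum_weightFrom_eq_one hp_sum hπ_sum θ m (t + 1) (by omega)
  calc expectedPathSum p π θ h (m + 1) t s a
      = ∑ a', ∑ s', π t θ s a a' * (p t s a' s' *
          (h t s a a' * ∑ ω, weightFrom p π θ m (t + 1) s' a' ω +
            expectedPathSum p π θ h m (t + 1) s' a')) := by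
        simp only [expectedPathSum, sum_fin_succ_pi, weightFrom_cons, pathSum_cons,
          Fintype.sum_prod_type, mul_sum, ← sum_add_distrib]
        refine sum_congr rfl fun a' _ => sum_congr rfl fun s' _ => sum_congr rfl fun ω _ => ?_
        ring
    _ = _ := by
        simp only [hW, mul_one, mul_add, sum_add_distrib, ← sum_mul, hp_sum t (by omega), one_mul,
          ← mul_sum]

end Expectation

lemma sum_deriv_eq_zero_of_sum_eq {ι 𝕜 F : Type*} [NontriviallyNormedField 𝕜]
    [NormedAddCommGroup F] [NormedSpace 𝕜 F] {u : Finset ι} {q : ι → 𝕜 → F} {C : F}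
    (hq : ∀ i ∈ u, Differentiable 𝕜 (q i)) (hsum : ∀ x, ∑ i ∈ u, q i x = C) (x : 𝕜) :
    ∑ i ∈ u, deriv (q i) x = 0 := by
  rw [← deriv_fun_sum fun i hi => (hq i hi).differentiableAt, funext hsum, deriv_const]

section ValueFunction

variable {S A : Type*} [Fintype S] [Fintype A] (N : ℕ) (p : ℕ → S → A → S → ℝ)
  (π : ℕ → ℝ → S → A → A → ℝ) (f : ℕ → S → A → ℝ) (c : ℕ → S → A → A → ℝ) (g : S → A → ℝ)

lemma Jval_self (θ : ℝ) : Jval N p π f c g θ N = g := by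
  simp [Jval, Jaux]

lemma Jval_of_lt (θ : ℝ) {k : ℕ} (hk : k < N) (s : S) (a : A) :
    Jval N p π f c g θ k s a =
      ∑ a', π k θ s a a' * (Vval N p π f c g θ k s a' - c k s a a') := by
  obtain ⟨m, hm⟩ : ∃ m, N - k = m + 1 := ⟨N - k - 1, by omega⟩
  rw [Jval, hm, Jaux, show N - (m + 1) = k by omega]
  simp only [Vval, Jval, show N - (k + 1) = m by omega]

def score (θ : ℝ) (k : ℕ) (s : S) (a a' : A) : ℝ :=
  deriv (fun θ' => π k θ' s a a') θ / π k θ s a a'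

def advantage (θ : ℝ) (k : ℕ) (s : S) (a a' : A) : ℝ :=
  Vval N p π f c g θ k s a' - c k s a a' - Jval N p π f c g θ k s a

lemma sum_mul_score_mul_advantage (θ : ℝ) (k : ℕ) (s : S) (a : A)
    (hπ_pos : ∀ a', 0 < π k θ s a a') (hπ_sum : ∀ θ, ∑ a', π k θ s a a' = 1)
    (hπ_diff : ∀ a', Differentiable ℝ fun θ => π k θ s a a') :
    ∑ a', π k θ s a a' * (score π θ k s a a' * advantage N p π f c g θ k s a a') =
      ∑ a', deriv (fun θ' => π k θ' s a a') θ * (Vval N p π f c g θ k s a' - c k s a a') := by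
  have hderiv : ∑ a', deriv (fun θ' => π k θ' s a a') θ = 0 :=
    sum_deriv_eq_zero_of_sum_eq (fun a' _ => hπ_diff a') hπ_sum θ
  calc ∑ a', π k θ s a a' * (score π θ k s a a' * advantage N p π f c g θ k s a a')
      = ∑ a', deriv (fun θ' => π k θ' s a a') θ * (Vval N p π f c g θ k s a' - c k s a a') -
          (∑ a', deriv (fun θ' => π k θ' s a a') θ) * Jval N p π f c g θ k s a := by
        rw [sum_mul, ← sum_sub_distrib]
        refine sum_congr rfl fun a' _ => ?_
        rw [score, advantage, ← mul_assoc, mul_div_cancel₀ _ (hπ_pos a').ne']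
        ring
    _ = _ := by rw [hderiv, zero_mul, sub_zero]

theorem hasDerivAt_Jval
    (hp_sum : ∀ k < N, ∀ s a, ∑ s', p k s a s' = 1)
    (hπ_pos : ∀ k < N, ∀ θ s a a', 0 < π k θ s a a')
    (hπ_sum : ∀ k < N, ∀ θ s a, ∑ a', π k θ s a a' = 1)
    (hπ_diff : ∀ k < N, ∀ s a a', Differentiable ℝ fun θ => π k θ s a a') (θ : ℝ) :
    ∀ m t, t + m = N → ∀ s a, HasDerivAt (fun θ' => Jval N p π f c g θ' t s a)
      (expectedPathSum p π θ
        (fun k s a a' => score π θ k s a a' * advantage N p π f c g θ k s a a') m t s a) θ := by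
  intro m
  induction m with
  | zero =>
    intro t ht s a
    rw [expectedPathSum_zero, show t = N by omega]
    simp only [Jval_self]
    exact hasDerivAt_const θ (g s a)
  | succ m ih =>
    intro t ht s a
    have htN : t < N := by omega
    have hV : ∀ a', HasDerivAt (fun θ' => Vval N p π f c g θ' t s a' - c t s a a')
        (∑ s', p t s a' s' * expectedPathSum p π θ
          (fun k s a a' => score π θ k s a a' * advantage N p π f c g θ k s a a')
          m (t + 1) s' a') θ := fun a' =>
      ((HasDerivAt.fun_sum fun s' _ => (ih (t + 1) (by omega) s' a').const_mul
        (p t s a' s')).const_add (f t s a')).sub_const (c t s a a')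
    have hJ := HasDerivAt.fun_sum fun a' (_ : a' ∈ univ) =>
      (hπ_diff t htN s a a' θ).hasDerivAt.mul (hV a')
    simp only [Jval_of_lt N p π f c g _ htN]
    rw [expectedPathSum_succ hp_sum hπ_sum θ _ (by omega)]
    simp only [mul_add, sum_add_distrib]
    rw [sum_mul_score_mul_advantage N p π f c g θ t s a (hπ_pos t htN θ s a)
      (fun θ => hπ_sum t htN θ s a) (hπ_diff t htN s a), ← sum_add_distrib]
    exact hJ

end ValueFunction

theorem policy_gradient_deterministic_grid_general
    {S A : Type*} [Fintype S] [Fintype A]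
    (N : ℕ)
    (p : ℕ → S → A → S → ℝ) (f : ℕ → S → A → ℝ) (c : ℕ → S → A → A → ℝ)
    (g : S → A → ℝ) (π : ℕ → ℝ → S → A → A → ℝ)
    (hp_sum : ∀ k < N, ∀ s a, ∑ s' : S, p k s a s' = 1)
    (hπ_pos : ∀ k < N, ∀ (θ : ℝ) (s : S) (a a' : A), 0 < π k θ s a a')
    (hπ_sum : ∀ k < N, ∀ (θ : ℝ) (s : S) (a : A), ∑ a' : A, π k θ s a a' = 1)
    (hπ_diff : ∀ k < N, ∀ (s : S) (a a' : A), Differentiable ℝ (fun θ => π k θ s a a'))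
    (s₀ : S) (a₀ : A) :
    ∀ θ : ℝ,
      HasDerivAt (fun θ' => Jval N p π f c g θ' 0 s₀ a₀)
        (∑ ω : Fin N → A × S, weight N p π θ s₀ a₀ ω *
          ∑ k ∈ Finset.range N,
            (deriv (fun θ' => π k θ' (stateAt s₀ ω k) (actAt a₀ ω k) (actAt a₀ ω (k + 1))) θ /
                π k θ (stateAt s₀ ω k) (actAt a₀ ω k) (actAt a₀ ω (k + 1))) *
              (Vval N p π f c g θ k (stateAt s₀ ω k) (actAt a₀ ω (k + 1)) -
                c k (stateAt s₀ ω k) (actAt a₀ ω k) (actAt a₀ ω (k + 1)) -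
                Jval N p π f c g θ k (stateAt s₀ ω k) (actAt a₀ ω k))) θ := by
  intro θ
  have h := hasDerivAt_Jval N p π f c g hp_sum hπ_pos hπ_sum hπ_diff θ N 0 (zero_add N) s₀ a₀
  simpa only [expectedPathSum, weightFrom, weight, pathSum, score, advantage, zero_add] using h

/-- **Policy gradient representation (deterministic-grid case).**
The map `θ ↦ J^θ_0(s₀,a₀)` is differentiable on `ℝ` and its derivative at every `θ` equals
`E^θ[ ∑_{k=0}^{N-1} (∂_θ π^θ_k(A_k|S_k,A_{k-1}) / π^θ_k(A_k|S_k,A_{k-1}))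
      · (V^θ_k(S_k,A_k) − c_k(S_k,A_{k-1},A_k) − J^θ_k(S_k,A_{k-1})) ]`. -/
theorem policy_gradient_deterministic_grid
    {S A : Type*} [Fintype S] [Fintype A] [Nonempty S] [Nonempty A]
    (N : ℕ) (hN : 1 ≤ N)
    (p : ℕ → S → A → S → ℝ) (f : ℕ → S → A → ℝ) (c : ℕ → S → A → A → ℝ)
    (g : S → A → ℝ) (π : ℕ → ℝ → S → A → A → ℝ)
    (hp_nonneg : ∀ k < N, ∀ s a s', 0 ≤ p k s a s')
    (hp_sum : ∀ k < N, ∀ s a, ∑ s' : S, p k s a s' = 1)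
    (hπ_pos : ∀ k < N, ∀ (θ : ℝ) (s : S) (a a' : A), 0 < π k θ s a a')
    (hπ_sum : ∀ k < N, ∀ (θ : ℝ) (s : S) (a : A), ∑ a' : A, π k θ s a a' = 1)
    (hπ_diff : ∀ k < N, ∀ (s : S) (a a' : A), Differentiable ℝ (fun θ => π k θ s a a'))
    (s₀ : S) (a₀ : A) :
    ∀ θ : ℝ,
      HasDerivAt (fun θ' => Jval N p π f c g θ' 0 s₀ a₀)
        (∑ ω : Fin N → A × S, weight N p π θ s₀ a₀ ω *
          ∑ k ∈ Finset.range N,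
            (deriv (fun θ' => π k θ' (stateAt s₀ ω k) (actAt a₀ ω k) (actAt a₀ ω (k + 1))) θ /
                π k θ (stateAt s₀ ω k) (actAt a₀ ω k) (actAt a₀ ω (k + 1))) *
              (Vval N p π f c g θ k (stateAt s₀ ω k) (actAt a₀ ω (k + 1)) -
                c k (stateAt s₀ ω k) (actAt a₀ ω k) (actAt a₀ ω (k + 1)) -
                Jval N p π f c g θ k (stateAt s₀ ω k) (actAt a₀ ω k))) θ :=
  policy_gradient_deterministic_grid_general N p f c g π hp_sum hπ_pos hπ_sum hπ_diff s₀ a₀
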